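/- Two standard cosets $wW_J$ and $w'W_{J'}$ of a Coxeter system $(W,S)$ give $\operatorname{conv}(wW_J \cdot h) = \operatorname{conv}(w'W_{J'} \cdot h)$ (for $h$ in the open fundamental chamber of the associated Weyl group action) if and only if $J = J'$ and $w^{-1}w' \in W_J$, i.e. if and only if $wW_J = w'W_{J'}$ as cosets. -/

import Mathlib

open scoped Pointwise

/-- The Coxeter matrix entry attached to a product `a_ij * a_ji` of entries of a
generalized Cartan matrix, via the standard table (`0` encodes `∞`). -/
def gcmCoxeterEntry (p : ℤ) : ℕ :=
  if p = 0 then 2 else if p = 1 then 3 else if p = 2 then 4 else if p = 3 then 6 else 0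

/-- The Weyl group of a symmetrizable generalized Cartan matrix, together with its action
on the real Cartan subalgebra of a free and cofree Kac–Moody root datum. -/
structure KMWeyl (n : ℕ) (V : Type*) [AddCommGroup V] [Module ℝ V]
    (W : Type*) [Group W] (M : CoxeterMatrix (Fin n)) where
  /-- the generalized Cartan matrix -/
  A : Matrix (Fin n) (Fin n) ℤ
  diag : ∀ i, A i i = 2
  offDiag : ∀ i j, i ≠ j → A i j ≤ 0
  zeroIff : ∀ i j, (A i j = 0 ↔ A j i = 0)
  symmetrizable : ∃ D B : Matrix (Fin n) (Fin n) ℝ, D.IsDiag ∧ B.IsSymm ∧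
    A.map (Int.cast : ℤ → ℝ) = D * B
  coxMat : ∀ i j, i ≠ j → M i j = gcmCoxeterEntry (A i j * A j i)
  /-- the Coxeter system structure on the Weyl group -/
  cs : CoxeterSystem M W
  /-- the linear action of the Weyl group on the Cartan subalgebra -/
  ρ : W →* (V →ₗ[ℝ] V)
  /-- the simple roots -/
  α : Fin n → (V →ₗ[ℝ] ℝ)
  /-- the simple coroots -/
  cor : Fin n → V
  pairing : ∀ i j, α j (cor i) = (A i j : ℝ)
  refl : ∀ i v, ρ (cs.simple i) v = v - α i v • cor i
  freeRoots : LinearIndependent ℝ α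
  cofree : LinearIndependent ℝ cor

namespace KMWeyl

variable {n : ℕ} {V : Type*} [AddCommGroup V] [Module ℝ V]
  {W : Type*} [Group W] {M : CoxeterMatrix (Fin n)}

/-- The orbit of a point `h` under the Weyl group. -/
def orb (K : KMWeyl n V W M) (h : V) : Set V := Set.range fun w => K.ρ w h

/-- The standard subgroup generated by the simple reflections indexed by `J`. -/
def std (K : KMWeyl n V W M) (J : Set (Fin n)) : Subgroup W :=
  Subgroup.closure (K.cs.simple '' J)

/-- The support of `w`: the indices occurring in every reduced word for `w`. -/
def supp (K : KMWeyl n V W M) (w : W) : Set (Fin n) :=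
  {i | ∀ l : List (Fin n), K.cs.wordProd l = w → l.length = K.cs.length w → i ∈ l}

end KMWeyl

/-- The subset `conv(wW_J · h)` of `Ξ_h` attached to the standard coset `wW_J`. -/
def cosetFace {n : ℕ} {V : Type*} [AddCommGroup V] [Module ℝ V]
    {W : Type*} [Group W] {M : CoxeterMatrix (Fin n)} (K : KMWeyl n V W M)
    (h : V) (w : W) (J : Set (Fin n)) : Set V :=
  convexHull ℝ ((fun u => K.ρ u h) '' ((fun x => w * x) '' (K.std J : Set W)))

/-!
Fix a linear form `f` with `f α_i^∨ = 1` for every simple coroot. By Tits' positivity theorem,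
`w α_i^∨` is a nonnegative combination of simple coroots whenever `ℓ(w s_i) > ℓ(w)`; it is proved
by induction on `ℓ(w)`, factoring `w = v u` with `u` in the dihedral subgroup `⟨s_i, s_j⟩` for a
right descent `j` of `w` and computing `u α_i^∨` explicitly. Writing `w = w' s_i` with
`ℓ(w') < ℓ(w)` gives `w h = w' h - α_i(h) w' α_i^∨`, so `f (w h) < f h` for all `w ≠ 1`. Hence for
`u ∉ B` the form `f ∘ u⁻¹` strictly separates `u h` from `conv(B h)`, and `conv(A h) ⊆ conv(B h)`
forces `A ⊆ B`: the convex hulls determine the cosets. Finally `W_J` determines `J`, since an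
element of `W_J` moves every vector by an element of the span of `{α_j^∨ : j ∈ J}`.
-/

theorem Subgroup.leftCoset_eq_leftCoset_iff {G : Type*} [Group G] {H H' : Subgroup G} {w w' : G} :
    w • (H : Set G) = w' • (H' : Set G) ↔ H = H' ∧ w⁻¹ * w' ∈ H := by
  constructor
  · intro heq
    have hw' : w⁻¹ * w' ∈ H := by
      have : w' ∈ w' • (H' : Set G) := (mem_leftCoset_iff w').mpr (by simp)
      exact (mem_leftCoset_iff w).mp (heq ▸ this)
    refine ⟨SetLike.coe_injective ?_, hw'⟩
    rw [(leftCoset_eq_iff H).mpr hw'] at heq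
    simpa using congrArg (w'⁻¹ • ·) heq
  · rintro ⟨rfl, hw'⟩
    exact (leftCoset_eq_iff H).mpr hw'

theorem LinearIndependent.exists_forall_apply_eq_one {ι 𝕜 E : Type*} [Field 𝕜] [AddCommGroup E]
    [Module 𝕜 E] {v : ι → E} (hv : LinearIndependent 𝕜 v) :
    ∃ f : E →ₗ[𝕜] 𝕜, ∀ i, f (v i) = 1 := by
  have hli := hv.linearIndepOn_id
  let b := Module.Basis.extend hli
  refine ⟨b.constr 𝕜 fun _ => 1, fun i => ?_⟩
  have hmem : v i ∈ hli.extend (Set.subset_univ _) := hli.subset_extend _ ⟨i, rfl⟩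
  have hb : b ⟨v i, hmem⟩ = v i := Module.Basis.extend_apply_self hli ⟨_, hmem⟩
  rw [← hb, b.constr_basis]

namespace CoxeterSystem

variable {B W : Type*} [Group W] {M : CoxeterMatrix B} (cs : CoxeterSystem M W)

theorem exists_eq_mul_wordProd_pair (i j : B) (w : W) :
    ∃ v ω, (∀ a ∈ ω, a = i ∨ a = j) ∧ w = v * cs.wordProd ω ∧
      cs.length w = cs.length v + ω.length ∧
      ¬cs.IsRightDescent v i ∧ ¬cs.IsRightDescent v j := by
  induction hn : cs.length w using Nat.strong_induction_on generalizing w with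
  | _ N ih =>
    by_cases hd : ∃ a, (a = i ∨ a = j) ∧ cs.IsRightDescent w a
    · obtain ⟨a, ha, hda⟩ := hd
      have hlen := cs.isRightDescent_iff.mp hda
      obtain ⟨v, ω, hω, hw, hl, hvi, hvj⟩ := ih _ (by omega) (w * cs.simple a) rfl
      refine ⟨v, ω.concat a, ?_, ?_, ?_, hvi, hvj⟩
      · simpa [or_imp, forall_and] using ⟨hω, ha⟩
      · rw [wordProd_concat, ← mul_assoc, ← hw, simple_mul_simple_cancel_right]
      · simp only [List.length_concat]; omega
    · push Not at hd
      exact ⟨w, [], by simp, by simp, by simp [hn], hd i (.inl rfl), hd j (.inr rfl)⟩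

theorem exists_wordProd_alternatingWord_mul_simple (x y a : B) (ha : a = x ∨ a = y) (k : ℕ) :
    ∃ k' ≤ k + 1, cs.wordProd (alternatingWord x y k) * cs.simple a =
        cs.wordProd (alternatingWord x y k') ∨
      cs.wordProd (alternatingWord x y k) * cs.simple a = cs.wordProd (alternatingWord y x k') := by
  rcases ha with rfl | rfl
  · exact ⟨k + 1, le_rfl, .inr (by rw [alternatingWord_succ, wordProd_concat])⟩
  · cases k with
    | zero => exact ⟨1, le_rfl, .inl (by simp [alternatingWord])⟩
    | succ k =>
      refine ⟨k, by omega, .inr ?_⟩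
      rw [alternatingWord_succ, wordProd_concat, simple_mul_simple_cancel_right]

theorem exists_wordProd_eq_alternatingWord (i j : B) (ω : List B)
    (hω : ∀ a ∈ ω, a = i ∨ a = j) :
    ∃ k ≤ ω.length, cs.wordProd ω = cs.wordProd (alternatingWord i j k) ∨
      cs.wordProd ω = cs.wordProd (alternatingWord j i k) := by
  induction ω using List.reverseRecOn with
  | nil => exact ⟨0, le_rfl, .inl rfl⟩
  | append_singleton ω a ih =>
    simp only [List.mem_append, List.mem_singleton] at hω
    obtain ⟨k, hk, hk'⟩ := ih fun b hb => hω b (.inl hb)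
    have ha := hω a (.inr rfl)
    rw [wordProd_append, wordProd_singleton, List.length_append, List.length_singleton]
    rcases hk' with h | h <;> rw [h]
    · obtain ⟨k', hk', h'⟩ := cs.exists_wordProd_alternatingWord_mul_simple i j a ha k
      exact ⟨k', by omega, h'⟩
    · obtain ⟨k', hk', h'⟩ := cs.exists_wordProd_alternatingWord_mul_simple j i a ha.symm k
      exact ⟨k', by omega, h'.symm⟩

theorem exists_wordProd_eq_alternatingWord_lt {v : W} {i j : B} {ω : List B}
    (hω : ∀ a ∈ ω, a = i ∨ a = j) (hlen : cs.length (v * cs.wordProd ω) = cs.length v + ω.length)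
    (hi : ¬cs.IsRightDescent (v * cs.wordProd ω) i) :
    ∃ k, cs.wordProd ω = cs.wordProd (alternatingWord i j k) ∧ (M i j = 0 ∨ k < M i j) := by
  have hred : cs.length (cs.wordProd ω) = ω.length :=
    le_antisymm (cs.length_wordProd_le ω) (by linarith [cs.length_mul_le v (cs.wordProd ω)])
  have not_ends_in_i : ∀ k, ω.length = k + 1 →
      cs.wordProd ω ≠ cs.wordProd (alternatingWord j i (k + 1)) := by
    intro k hk heq
    apply hi
    have hmul : v * cs.wordProd ω * cs.simple i = v * cs.wordProd (alternatingWord i j k) := by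
      rw [heq, alternatingWord_succ, wordProd_concat, mul_assoc, simple_mul_simple_cancel_right]
    have := cs.length_wordProd_le (alternatingWord i j k)
    rw [length_alternatingWord] at this
    unfold IsRightDescent
    rw [hmul]
    linarith [cs.length_mul_le v (cs.wordProd (alternatingWord i j k))]
  obtain ⟨k, hk, hk'⟩ := cs.exists_wordProd_eq_alternatingWord i j ω hω
  have hk_eq : k = ω.length := by
    refine le_antisymm hk ?_
    rw [← hred]
    rcases hk' with h | h <;> rw [h] <;>
      exact (cs.length_wordProd_le _).trans_eq (length_alternatingWord _ _ _)
  subst hk_eq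
  rcases hk' with h | h
  · refine ⟨_, h, ?_⟩
    by_contra! hM
    rcases hM.2.lt_or_eq with hlt | heq
    · exact cs.not_isReduced_alternatingWord i j hM.1 hlt
        (by rw [IsReduced, ← h, hred, length_alternatingWord])
    · -- the braid relation rewrites the word of length `M i j` into one ending in `i`
      obtain ⟨m, hm⟩ := Nat.exists_eq_succ_of_ne_zero hM.1
      refine not_ends_in_i m (by omega) ?_
      have hbraid := cs.wordProd_braidWord_eq i j
      rw [braidWord, braidWord, M.symmetric j i, hm] at hbraid
      rw [h, ← heq, hm, hbraid]
  · rcases hlen' : ω.length with _ | m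
    · exact ⟨0, by simpa [hlen', alternatingWord] using h, Nat.eq_zero_or_pos _⟩
    · exact absurd (hlen' ▸ h) (not_ends_in_i m hlen')

end CoxeterSystem

/-- With `p = -a_ij` and `q = -a_ji`, these are the coordinates of `u α_i^∨` in the basis
`α_i^∨, α_j^∨`, where `u = ⋯ s_i s_j` is the alternating product of length `k` ending in `s_j`. -/
def rankTwoCoeff (p q : ℝ) : ℕ → ℝ × ℝ
  | 0 => (1, 0)
  | k + 1 =>
    let c := rankTwoCoeff p q k
    if Even k then (c.1, p * c.1 - c.2) else (q * c.2 - c.1, c.2)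

theorem rankTwoCoeff_nonneg_of_four_le {p q : ℝ} (hp : 0 ≤ p) (hq : 0 ≤ q) (hpq : 4 ≤ p * q)
    (k : ℕ) : 0 ≤ (rankTwoCoeff p q k).1 ∧ 0 ≤ (rankTwoCoeff p q k).2 := by
  suffices ∀ k, (0 ≤ (rankTwoCoeff p q k).1 ∧ 0 ≤ (rankTwoCoeff p q k).2) ∧
      (if Even k then 2 * (rankTwoCoeff p q k).2 ≤ p * (rankTwoCoeff p q k).1
        else 2 * (rankTwoCoeff p q k).1 ≤ q * (rankTwoCoeff p q k).2) from (this k).1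
  intro k
  induction k with
  | zero => simp [rankTwoCoeff, hp]
  | succ k ih =>
    obtain ⟨⟨ha, hb⟩, hab⟩ := ih
    by_cases hk : Even k
    · simp only [hk, if_true] at hab
      simp only [rankTwoCoeff, hk, if_true, Nat.even_add_one, not_true, if_false]
      refine ⟨⟨ha, by linarith⟩, ?_⟩
      nlinarith [mul_le_mul_of_nonneg_left hab hq]
    · simp only [hk, if_false] at hab
      simp only [rankTwoCoeff, hk, if_false, Nat.even_add_one, not_false_eq_true, if_true]
      refine ⟨⟨by linarith, hb⟩, ?_⟩
      nlinarith [mul_le_mul_of_nonneg_left hab hp]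

theorem rankTwoCoeff_nonneg {p q : ℝ} (hp : 0 ≤ p) (hq : 0 ≤ q) {e : ℤ} (he : p * q = e)
    {k : ℕ} (hk : gcmCoxeterEntry e = 0 ∨ k < gcmCoxeterEntry e) :
    0 ≤ (rankTwoCoeff p q k).1 ∧ 0 ≤ (rankTwoCoeff p q k).2 := by
  have he0 : (0 : ℤ) ≤ e := by exact_mod_cast he ▸ mul_nonneg hp hq
  by_cases he4 : 4 ≤ e
  · exact rankTwoCoeff_nonneg_of_four_le hp hq (he ▸ by exact_mod_cast he4) k
  obtain rfl | rfl | rfl | rfl : e = 0 ∨ e = 1 ∨ e = 2 ∨ e = 3 := by omega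
  all_goals
    simp only [gcmCoxeterEntry] at hk; norm_num at hk; push_cast at he
    interval_cases k <;> simp only [rankTwoCoeff, Nat.even_iff] <;> norm_num <;>
      (try constructor) <;> nlinarith [congrArg (· * p) he, congrArg (· * (p * q)) he]

namespace KMWeyl

open CoxeterSystem

variable {n : ℕ} {V : Type*} [AddCommGroup V] [Module ℝ V]
  {W : Type*} [Group W] {M : CoxeterMatrix (Fin n)} (K : KMWeyl n V W M)

def corootCone : PointedCone ℝ V := PointedCone.hull ℝ (Set.range K.cor)

theorem cor_mem_corootCone (i : Fin n) : K.cor i ∈ K.corootCone :=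
  PointedCone.subset_hull (Set.mem_range_self i)

theorem rho_inv_apply_rho (w : W) (x : V) : K.ρ w⁻¹ (K.ρ w x) = x := by
  rw [← Module.End.mul_apply, ← map_mul, inv_mul_cancel, map_one, Module.End.one_apply]

theorem rho_alternatingWord_cor (i j : Fin n) (k : ℕ) :
    K.ρ (K.cs.wordProd (alternatingWord i j k)) (K.cor i) =
      (rankTwoCoeff (-K.A i j) (-K.A j i) k).1 • K.cor i +
        (rankTwoCoeff (-K.A i j) (-K.A j i) k).2 • K.cor j := by
  induction k with
  | zero => simp [alternatingWord, rankTwoCoeff]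
  | succ k ih =>
    rw [alternatingWord_succ', wordProd_cons, map_mul, Module.End.mul_apply, ih]
    by_cases hk : Even k <;>
      simp only [hk, if_true, if_false, rankTwoCoeff, map_add, map_smul, K.refl, K.pairing,
        K.diag] <;> module

theorem rankTwoCoeff_nonneg_of_lt {i j : Fin n} (hij : i ≠ j) {k : ℕ}
    (hk : M i j = 0 ∨ k < M i j) :
    0 ≤ (rankTwoCoeff (-K.A i j) (-K.A j i) k).1 ∧
      0 ≤ (rankTwoCoeff (-K.A i j) (-K.A j i) k).2 := by
  refine rankTwoCoeff_nonneg ?_ ?_ (e := K.A i j * K.A j i) (by push_cast; ring)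
    (K.coxMat i j hij ▸ hk)
  · exact neg_nonneg.mpr (by exact_mod_cast K.offDiag i j hij)
  · exact neg_nonneg.mpr (by exact_mod_cast K.offDiag j i hij.symm)

theorem rho_cor_mem_corootCone {w : W} {i : Fin n} (hi : ¬K.cs.IsRightDescent w i) :
    K.ρ w (K.cor i) ∈ K.corootCone := by
  induction hN : K.cs.length w using Nat.strong_induction_on generalizing w i with
  | _ N ih =>
    rcases eq_or_ne w 1 with rfl | hw
    · simpa using K.cor_mem_corootCone i
    obtain ⟨j, hj⟩ := K.cs.exists_rightDescent_of_ne_one hw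
    have hij : i ≠ j := by rintro rfl; exact hi hj
    obtain ⟨v, ω, hω, rfl, hlen, hvi, hvj⟩ := K.cs.exists_eq_mul_wordProd_pair i j w
    have hv : K.cs.length v < N := by
      rcases ω.eq_nil_or_concat with rfl | ⟨ω', a, rfl⟩
      · simp only [wordProd_nil, mul_one] at hj; exact absurd hj hvj
      · simp only [List.length_concat] at hlen; omega
    obtain ⟨k, hk, hkM⟩ := K.cs.exists_wordProd_eq_alternatingWord_lt hω hlen hi
    obtain ⟨ha, hb⟩ := K.rankTwoCoeff_nonneg_of_lt hij hkM
    rw [map_mul, Module.End.mul_apply, hk, K.rho_alternatingWord_cor, map_add, map_smul, map_smul]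
    exact add_mem (K.corootCone.smul_mem ha (ih _ hv hvi rfl))
      (K.corootCone.smul_mem hb (ih _ hv hvj rfl))

theorem pos_of_mem_corootCone {f : V →ₗ[ℝ] ℝ} (hf : ∀ l, f (K.cor l) = 1) {x : V}
    (hx : x ∈ K.corootCone) (hx0 : x ≠ 0) : 0 < f x := by
  obtain ⟨c, rfl⟩ := (Submodule.mem_span_range_iff_exists_fun {c : ℝ // 0 ≤ c}).mp hx
  have hfx : f (∑ l, c l • K.cor l) = ∑ l, (c l : ℝ) := by
    rw [map_sum]
    exact Finset.sum_congr rfl fun l _ => by rw [LinearMap.map_smul_of_tower, hf]; exact mul_one _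
  rw [hfx]
  refine lt_of_le_of_ne (Finset.sum_nonneg fun l _ => (c l).2) fun h0 => hx0 ?_
  have hc := (Finset.sum_eq_zero_iff_of_nonneg fun l _ => (c l).2).mp h0.symm
  refine Finset.sum_eq_zero fun l hl => ?_
  rw [show c l = 0 from Subtype.ext (hc l hl), zero_smul]

theorem rho_ne_zero (w : W) {x : V} (hx : x ≠ 0) : K.ρ w x ≠ 0 := fun h0 =>
  hx (by simpa [h0] using (K.rho_inv_apply_rho w x).symm)

theorem apply_rho_lt {h : V} (hC : ∀ i, 0 < K.α i h) {f : V →ₗ[ℝ] ℝ}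
    (hf : ∀ l, f (K.cor l) = 1) {w : W} (hw : w ≠ 1) : f (K.ρ w h) < f h := by
  induction hN : K.cs.length w using Nat.strong_induction_on generalizing w with
  | _ N ih =>
    obtain ⟨i, hi⟩ := K.cs.exists_rightDescent_of_ne_one hw
    have hlen := K.cs.isRightDescent_iff.mp hi
    set w' := w * K.cs.simple i
    have hpos : 0 < f (K.ρ w' (K.cor i)) :=
      K.pos_of_mem_corootCone hf
        (K.rho_cor_mem_corootCone (K.cs.isRightDescent_iff_not_isRightDescent_mul.mp hi))
        (K.rho_ne_zero w' (K.cofree.ne_zero i))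
    have hstep : f (K.ρ w h) = f (K.ρ w' h) - K.α i h * f (K.ρ w' (K.cor i)) := by
      rw [show w = w' * K.cs.simple i by simp [w'], map_mul, Module.End.mul_apply, K.refl]
      simp
    have hle : f (K.ρ w' h) ≤ f h := by
      rcases eq_or_ne w' 1 with h1 | h1
      · simp [h1]
      · exact (ih _ (by omega) h1 rfl).le
    linarith [mul_pos (hC i) hpos]

theorem subset_of_convexHull_image_subset {h : V} (hC : ∀ i, 0 < K.α i h) {A B : Set W}
    (hAB : convexHull ℝ ((fun u => K.ρ u h) '' A) ⊆ convexHull ℝ ((fun u => K.ρ u h) '' B)) :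
    A ⊆ B := by
  obtain ⟨f, hf⟩ := K.cofree.exists_forall_apply_eq_one
  intro u hu
  by_contra hub
  let g := f ∘ₗ K.ρ u⁻¹
  have hB : (fun u => K.ρ u h) '' B ⊆ {x | g x < f h} := by
    rintro _ ⟨b, hb, rfl⟩
    have hub' : u⁻¹ * b ≠ 1 := fun h1 => hub (inv_mul_eq_one.mp h1 ▸ hb)
    simpa [g, map_mul] using K.apply_rho_lt hC hf hub'
  have := convexHull_min hB (convex_halfSpace_lt g.isLinear _)
    (hAB (subset_convexHull ℝ _ ⟨u, hu, rfl⟩))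
  simp [g] at this

theorem rho_sub_mem_span_of_mem_std {J : Set (Fin n)} {x : W} (hx : x ∈ K.std J) (v : V) :
    K.ρ x v - v ∈ Submodule.span ℝ (K.cor '' J) := by
  induction hx using Subgroup.closure_induction generalizing v with
  | mem y hy =>
    obtain ⟨l, hl, rfl⟩ := hy
    rw [K.refl, sub_sub_cancel_left]
    exact neg_mem (Submodule.smul_mem _ _ (Submodule.subset_span ⟨l, hl, rfl⟩))
  | one => simp
  | mul y z _ _ hy hz =>
    rw [map_mul, Module.End.mul_apply, ← sub_add_sub_cancel _ (K.ρ z v)]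
    exact add_mem (hy _) (hz _)
  | inv y _ hy =>
    have := hy (K.ρ y⁻¹ v)
    rw [← Module.End.mul_apply, ← map_mul, mul_inv_cancel, map_one, Module.End.one_apply] at this
    rw [← neg_sub]
    exact neg_mem this

theorem simple_mem_std_iff (J : Set (Fin n)) (i : Fin n) :
    K.cs.simple i ∈ K.std J ↔ i ∈ J := by
  refine ⟨fun hi => ?_, fun hi => Subgroup.subset_closure ⟨i, hi, rfl⟩⟩
  have h2 := K.rho_sub_mem_span_of_mem_std hi (K.cor i)
  rw [K.refl, K.pairing, K.diag, sub_sub_cancel_left] at h2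
  by_contra hiJ
  refine K.cofree.notMem_span_image hiJ ?_
  simpa [smul_smul] using Submodule.smul_mem _ (-(1 / 2 : ℝ)) h2

theorem std_injective : Function.Injective K.std := fun J J' hJ => by
  ext i
  rw [← K.simple_mem_std_iff, hJ, K.simple_mem_std_iff]

end KMWeyl

/-- For `h` in the open chamber, `conv(wW_J·h) = conv(w'W_{J'}·h)` iff `J = J'` and
`w⁻¹w' ∈ W_J`, i.e. iff the two standard cosets coincide. -/
theorem stmt_9 {n : ℕ} {V : Type*} [AddCommGroup V] [Module ℝ V]
    {W : Type*} [Group W] {M : CoxeterMatrix (Fin n)} (K : KMWeyl n V W M)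
    (h : V) (hC : ∀ i, 0 < K.α i h)
    (w w' : W) (J J' : Set (Fin n)) :
    (cosetFace K h w J = cosetFace K h w' J' ↔ (J = J' ∧ w⁻¹ * w' ∈ K.std J)) ∧
    (cosetFace K h w J = cosetFace K h w' J' ↔
      (fun x => w * x) '' (K.std J : Set W) = (fun x => w' * x) '' (K.std J' : Set W)) := by
  have hface : cosetFace K h w J = cosetFace K h w' J' ↔
      (fun x => w * x) '' (K.std J : Set W) = (fun x => w' * x) '' (K.std J' : Set W) :=
    ⟨fun heq => (K.subset_of_convexHull_image_subset hC heq.subset).antisymm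
        (K.subset_of_convexHull_image_subset hC heq.symm.subset),
      fun heq => by rw [cosetFace, cosetFace, heq]⟩
  refine ⟨hface.trans ?_, hface⟩
  change w • (K.std J : Set W) = w' • (K.std J' : Set W) ↔ _
  rw [Subgroup.leftCoset_eq_leftCoset_iff, K.std_injective.eq_iff]
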